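/- Let D ⊆ ℂ be a domain. A sequence {f_ν} of holomorphic curves on D into ℙⁿ converges uniformly on compact subsets of D to a holomorphic curve f : D → ℙⁿ if and only if for every a ∈ D there exists an open neighbourhood U of a in D and reduced representations f̂_ν = (f_{ν,0}, …, f_{ν,n}) of f_ν on U such that each sequence {f_{ν,l}}_{ν} (l = 0, …, n) converges uniformly on compact subsets of U to a holomorphic function f_l on U, and (f₀, …, f_n) is a reduced representation of f on U. -/

import Mathlib

open Filter Topology
open scoped LinearAlgebra.Projectivization

noncomputable section

/-- `n`-dimensional complex projective space. -/
abbrev Pn (n : ℕ) := ℙ ℂ (Fin (n + 1) → ℂ)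

/-- The quotient topology on complex projective space. -/
instance (n : ℕ) : TopologicalSpace (Pn n) :=
  inferInstanceAs (TopologicalSpace (Quotient (projectivizationSetoid ℂ (Fin (n + 1) → ℂ))))

/-- The hyperplane in `Pn n` with coefficient vector `α`. -/
def hyp (n : ℕ) (α : Fin (n + 1) → ℂ) : Set (Pn n) :=
  {p | ∑ i, α i * p.rep i = 0}

/-- `q` coefficient vectors are in general position: every `(n+1)` of them form an
invertible matrix. -/
def InGenPos {q n : ℕ} (α : Fin q → Fin (n + 1) → ℂ) : Prop :=
  ∀ e : Fin (n + 1) → Fin q, StrictMono e → (Matrix.of fun l i => α (e l) i).det ≠ 0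

/-- The quantity `𝒟(H₁, …, H_q)`: the product over all `(n+1)`-element subsets
(ordered increasingly) of the absolute values of the corresponding determinants. -/
def genPosProd {q n : ℕ} (α : Fin q → Fin (n + 1) → ℂ) : ℝ :=
  ∏ e ∈ @Finset.filter _ (fun e : Fin (n + 1) → Fin q => StrictMono e)
      (Classical.decPred _) Finset.univ,
    ‖(Matrix.of fun l i => α (e l) i).det‖

/-- `F` is a reduced representation of the holomorphic curve `f` on `U`. -/
structure IsRedRep {E : Type*} [NormedAddCommGroup E] [NormedSpace ℂ E]
    (n : ℕ) (U : Set E) (f : E → Pn n) (F : E → Fin (n + 1) → ℂ) : Prop where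
  holo : ∀ i, DifferentiableOn ℂ (fun z => F z i) U
  nonzero : ∀ z ∈ U, F z ≠ 0
  repr : ∀ z, (hz : z ∈ U) → f z = Projectivization.mk ℂ (F z) (nonzero z hz)

/-- `f` is a holomorphic curve on `D` into `Pn n`. -/
def IsHolCurve {E : Type*} [NormedAddCommGroup E] [NormedSpace ℂ E]
    (n : ℕ) (D : Set E) (f : E → Pn n) : Prop :=
  ∀ a ∈ D, ∃ U : Set E, IsOpen U ∧ a ∈ U ∧ U ⊆ D ∧ ∃ F, IsRedRep n U f F

/-- Convergence, uniformly on compact subsets of `D` (phrased via the compact-open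
topology, which agrees with uniform convergence on compacta for the compact
Hausdorff target `Pn n`). -/
def TendstoOnCompacts {E X : Type*} [TopologicalSpace E] [TopologicalSpace X]
    (D : Set E) (g : ℕ → E → X) (f : E → X) : Prop :=
  ∀ K : Set E, K ⊆ D → IsCompact K → ∀ V : Set X, IsOpen V → f '' K ⊆ V →
    ∀ᶠ ν in atTop, (g ν) '' K ⊆ V

/-- A family of holomorphic maps into `Pn n` is normal on `D` if every sequence has a
subsequence converging uniformly on compact subsets of `D` to a holomorphic map. -/
def NormalFamilyOn {E : Type*} [NormedAddCommGroup E] [NormedSpace ℂ E] (n : ℕ)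
    (D : Set E) (F : Set (E → Pn n)) : Prop :=
  ∀ f : ℕ → E → Pn n, (∀ ν, f ν ∈ F) →
    ∃ φ : ℕ → ℕ, StrictMono φ ∧ ∃ g : E → Pn n, IsHolCurve n D g ∧
      TendstoOnCompacts D (fun ν => f (φ ν)) g

/-- `‖f̂(z)‖ = max_l |f_l(z)|` for a (reduced) representation. -/
def repNorm {E : Type*} (n : ℕ) (F : E → Fin (n + 1) → ℂ) (z : E) : ℝ :=
  Finset.univ.sup' Finset.univ_nonempty fun l => ‖F z l‖

/-- `g` is a derived holomorphic map `∇f` of `f` on `D`. -/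
def IsDerivedCurve (n : ℕ) (D : Set ℂ) (f g : ℂ → Pn n) : Prop :=
  ∃ F : ℂ → Fin (n + 1) → ℂ, IsRedRep n D f F ∧ (∃ z ∈ D, F z 0 ≠ 0) ∧
    ∃ d : ℂ → ℂ, DifferentiableOn ℂ d D ∧
      ∃ G : ℂ → Fin (n + 1) → ℂ, IsRedRep n D g G ∧
        (∀ z ∈ D, G z 0 * d z = F z 0 ^ 2) ∧
        (∀ z ∈ D, ∀ l : Fin n, G z l.succ * d z =
          F z 0 * deriv (fun w => F w l.succ) z - deriv (fun w => F w 0) z * F z l.succ)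

/-- Two holomorphic curves share the hyperplane with coefficient vector `α` on `D`. -/
def SharesHyp (n : ℕ) (D : Set ℂ) (f g : ℂ → Pn n) (α : Fin (n + 1) → ℂ) : Prop :=
  {z ∈ D | f z ∈ hyp n α} = {z ∈ D | g z ∈ hyp n α} ∧
    ∀ z ∈ D, f z ∈ hyp n α → f z = g z

/-- `a` defines a moving hyperplane on `D`: holomorphic coefficients with no common zero. -/
def IsMovingHyperplane (n : ℕ) (D : Set ℂ) (a : ℂ → Fin (n + 1) → ℂ) : Prop :=
  (∀ i, DifferentiableOn ℂ (fun z => a z i) D) ∧ ∀ z ∈ D, a z ≠ 0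

/-- The holomorphic curve `H̃` associated with a moving hyperplane. -/
def tildeCurve (n : ℕ) (a : ℂ → Fin (n + 1) → ℂ) (z : ℂ) : Pn n :=
  if h : a z ≠ 0 then Projectivization.mk ℂ (a z) h
  else Classical.arbitrary (Pn n)



/-!
Near `a`, pick `i` with `g(a)ᵢ ≠ 0`. Convergence on compacta forces `f_ν`, for `ν` large, to map
a closed ball around `a` into the affine chart `{wᵢ ≠ 0}`, where the affine coordinates
`wⱼ / wᵢ` are continuous and give reduced representations of `f_ν` and `g`; compact-open
convergence into the chart is then uniform convergence of these coordinates. Conversely, locally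
uniform convergence of representations `F_ν → G` carries over to `[F_ν] → [G]` because the
projection `v ↦ [v]` is continuous on `v ≠ 0`.
-/

namespace Projectivization

variable {K ι : Type*} [Field K]

def affineCoords (i : ι) (p : ℙ K (ι → K)) : ι → K := fun j => p.rep j / p.rep i

variable {v : ι → K} {p : ℙ K (ι → K)} {i : ι}

theorem rep_apply_ne_zero_iff (hv : v ≠ 0) : (mk K v hv).rep i ≠ 0 ↔ v i ≠ 0 := by
  obtain ⟨a, ha⟩ := exists_smul_eq_mk_rep K v hv
  simp [← ha, Units.smul_def]

theorem affineCoords_mk (hv : v ≠ 0) : affineCoords i (mk K v hv) = fun j => v j / v i := by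
  obtain ⟨a, ha⟩ := exists_smul_eq_mk_rep K v hv
  ext j
  simp only [affineCoords, ← ha, Pi.smul_apply, Units.smul_def, smul_eq_mul,
    mul_div_mul_left _ _ a.ne_zero]

theorem affineCoords_self (h : p.rep i ≠ 0) : affineCoords i p i = 1 := div_self h

theorem affineCoords_ne_zero (h : p.rep i ≠ 0) : affineCoords i p ≠ 0 :=
  fun h0 => one_ne_zero ((affineCoords_self h).symm.trans (congrFun h0 i))

theorem mk_affineCoords (h : p.rep i ≠ 0) :
    mk K (affineCoords i p) (affineCoords_ne_zero h) = p := by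
  conv_rhs => rw [← mk_rep p]
  rw [mk_eq_mk_iff]
  refine ⟨(Units.mk0 (p.rep i) h)⁻¹, funext fun j => ?_⟩
  simp [affineCoords, Units.smul_def, div_eq_inv_mul]

end Projectivization

open Projectivization

section Topology

variable {n : ℕ}

theorem continuous_mk' : Continuous (mk' ℂ : {v : Fin (n + 1) → ℂ // v ≠ 0} → Pn n) :=
  continuous_quotient_mk'

theorem isOpen_Pn_iff {S : Set (Pn n)} :
    IsOpen S ↔ IsOpen {v : Fin (n + 1) → ℂ | ∃ h : v ≠ 0, mk ℂ v h ∈ S} := by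
  have hq : Topology.IsQuotientMap (mk' ℂ : {v : Fin (n + 1) → ℂ // v ≠ 0} → Pn n) :=
    isQuotientMap_quotient_mk'
  have himg : Subtype.val '' (mk' ℂ ⁻¹' S) = {v | ∃ h : v ≠ 0, mk ℂ v h ∈ S} := by
    ext v
    exact ⟨fun ⟨w, hw, hwv⟩ => hwv ▸ ⟨w.2, hw⟩, fun ⟨hv, hS⟩ => ⟨⟨v, hv⟩, hS, rfl⟩⟩
  have hemb : IsOpenEmbedding (Subtype.val : {v : Fin (n + 1) → ℂ // v ≠ 0} → _) :=
    (isOpen_ne_fun continuous_id continuous_const).isOpenEmbedding_subtypeVal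
  rw [← hq.isOpen_preimage, ← himg]
  exact hemb.isOpen_iff_image_isOpen

theorem isOpen_setOf_affineCoords_mem (i : Fin (n + 1)) {W : Set (Fin (n + 1) → ℂ)}
    (hW : IsOpen W) : IsOpen {p : Pn n | p.rep i ≠ 0 ∧ affineCoords i p ∈ W} := by
  rw [isOpen_Pn_iff]
  have : {v : Fin (n + 1) → ℂ | ∃ h : v ≠ 0,
      mk ℂ v h ∈ {p : Pn n | p.rep i ≠ 0 ∧ affineCoords i p ∈ W}}
      = {v | v i ≠ 0} ∩ (fun v j => v j / v i) ⁻¹' W := by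
    ext v
    constructor
    · rintro ⟨hv, hi, hW⟩
      rw [affineCoords_mk hv] at hW
      exact ⟨(rep_apply_ne_zero_iff hv).1 hi, hW⟩
    · rintro ⟨hi, hW⟩
      have hv : v ≠ 0 := fun h0 => hi (congrFun h0 i)
      refine ⟨hv, (rep_apply_ne_zero_iff hv).2 hi, ?_⟩
      rwa [affineCoords_mk hv]
  rw [this]
  refine ContinuousOn.isOpen_inter_preimage ?_
    (isOpen_ne_fun (continuous_apply i) continuous_const) hW
  exact continuousOn_pi.2 fun j =>
    (continuous_apply j).continuousOn.div (continuous_apply i).continuousOn fun v hv => hv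

theorem isOpen_setOf_rep_ne_zero (i : Fin (n + 1)) : IsOpen {p : Pn n | p.rep i ≠ 0} := by
  simpa using isOpen_setOf_affineCoords_mem i isOpen_univ

theorem continuousOn_affineCoords (i : Fin (n + 1)) :
    ContinuousOn (affineCoords i) {p : Pn n | p.rep i ≠ 0} := by
  refine continuousOn_iff'.2 fun W hW => ⟨_, isOpen_setOf_affineCoords_mem i hW, ?_⟩
  ext p
  exact ⟨fun h => ⟨⟨h.2, h.1⟩, h.2⟩, fun h => ⟨h.1.2, h.2⟩⟩

end Topology

section HolCurve

variable {E : Type*} [NormedAddCommGroup E] [NormedSpace ℂ E] {n : ℕ} {U V D : Set E}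
  {f : E → Pn n} {F : E → Fin (n + 1) → ℂ}

theorem IsRedRep.mono (hF : IsRedRep n U f F) (hVU : V ⊆ U) : IsRedRep n V f F :=
  ⟨fun i => (hF.holo i).mono hVU, fun z hz => hF.nonzero z (hVU hz),
    fun z hz => hF.repr z (hVU hz)⟩

theorem IsRedRep.continuousOn (hF : IsRedRep n U f F) : ContinuousOn f U := by
  rw [continuousOn_iff_continuous_domRestrict]
  have hFc : Continuous (U.domRestrict F) :=
    (continuousOn_pi.2 fun i => (hF.holo i).continuousOn).domRestrict
  convert continuous_mk'.comp (hFc.subtype_mk fun z => hF.nonzero z z.2) using 1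
  ext z
  exact hF.repr z z.2

theorem IsHolCurve.continuousAt (hf : IsHolCurve n D f) {a : E} (ha : a ∈ D) :
    ContinuousAt f a := by
  obtain ⟨U, hU, haU, -, F, hF⟩ := hf a ha
  exact hF.continuousOn.continuousAt (hU.mem_nhds haU)

theorem IsHolCurve.isRedRep_affineCoords (hf : IsHolCurve n D f) (hUD : U ⊆ D)
    {i : Fin (n + 1)} (hi : ∀ z ∈ U, (f z).rep i ≠ 0) :
    IsRedRep n U f (fun z => affineCoords i (f z)) := by
  refine ⟨fun j z hz => ?_, fun z hz => affineCoords_ne_zero (hi z hz),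
    fun z hz => (mk_affineCoords (hi z hz)).symm⟩
  obtain ⟨W, hW, hzW, -, H, hH⟩ := hf z (hUD hz)
  have hcoords : ∀ w ∈ W, affineCoords i (f w) j = H w j / H w i := fun w hw => by
    rw [hH.repr w hw, affineCoords_mk]
  have hHi : H z i ≠ 0 := by
    have := hi z hz
    rwa [hH.repr z hzW, rep_apply_ne_zero_iff] at this
  have hdiff : DifferentiableAt ℂ (fun w => H w j / H w i) z := by
    simpa only [div_eq_mul_inv] using ((hH.holo j).differentiableAt (hW.mem_nhds hzW)).fun_mul
      (((hH.holo i).differentiableAt (hW.mem_nhds hzW)).fun_inv hHi)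
  exact hdiff.differentiableWithinAt.congr_of_eventuallyEq
    (eventually_nhdsWithin_of_eventually_nhds (eventually_of_mem (hW.mem_nhds hzW) hcoords))
    (hcoords z hzW)

theorem exists_isRedRep_of_lt {f : ℕ → E → Pn n} (hf : ∀ ν, IsHolCurve n D (f ν)) {a : E}
    (ha : a ∈ D) (N : ℕ) :
    ∃ W : Set E, IsOpen W ∧ a ∈ W ∧
      ∃ F : ℕ → E → Fin (n + 1) → ℂ, ∀ ν < N, IsRedRep n W (f ν) (F ν) := by
  choose W hW haW _ F hF using fun ν => hf ν a ha
  refine ⟨⋂ ν ∈ Finset.range N, W ν, isOpen_biInter_finset fun ν _ => hW ν,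
    Set.mem_biInter fun ν _ => haW ν, F, fun ν hν => (hF ν).mono ?_⟩
  exact Set.biInter_subset_of_mem (Finset.mem_range.2 hν)

end HolCurve

section Convergence

theorem IsCompact.eventually_forall_mem {ι X : Type*} [TopologicalSpace X] {K : Set X}
    (hK : IsCompact K) {l : Filter ι} {P : ι → X → Prop}
    (h : ∀ x ∈ K, ∀ᶠ q in l ×ˢ 𝓝 x, P q.1 q.2) : ∀ᶠ i in l, ∀ x ∈ K, P i x := by
  refine hK.induction_on (p := fun s => ∀ᶠ i in l, ∀ x ∈ s, P i x) (by simp)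
    (fun s t hst ht => ht.mono fun i hi x hx => hi x (hst hx))
    (fun s t hs ht => (hs.and ht).mono fun i hi x hx => hx.elim (hi.1 x) (hi.2 x))
    fun x hx => ?_
  obtain ⟨pa, hpa, pb, hpb, hP⟩ := eventually_prod_iff.1 (h x hx)
  exact ⟨{y | pb y}, mem_nhdsWithin_of_mem_nhds hpb, hpa.mono fun i hi y hy => hP hi hy⟩

theorem TendstoUniformlyOn.tendsto_prod_nhds {ι α β : Type*} [TopologicalSpace α]
    [UniformSpace β] {F : ι → α → β} {f : α → β} {p : Filter ι} {s : Set α} {x : α}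
    (h : TendstoUniformlyOn F f p s) (hs : s ∈ 𝓝 x) (hf : ContinuousAt f x) :
    Tendsto (fun q : ι × α => F q.1 q.2) (p ×ˢ 𝓝 x) (𝓝 (f x)) :=
  tendsto_comp_of_locally_uniform_limit hf tendsto_snd
    fun u hu => ⟨s, hs, tendsto_fst.eventually (h u hu)⟩

theorem TendstoOnCompacts.tendstoUniformlyOn_comp {X Y Z : Type*} [TopologicalSpace X]
    [RegularSpace X] [TopologicalSpace Y] [UniformSpace Z] {D K : Set X} {C : Set Y}
    {f : ℕ → X → Y} {g : X → Y} {φ : Y → Z} (h : TendstoOnCompacts D f g) (hKD : K ⊆ D)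
    (hK : IsCompact K) (hC : IsOpen C) (hφ : ContinuousOn φ C) (hgK : Set.MapsTo g K C)
    (hφg : ContinuousOn (φ ∘ g) K) :
    TendstoUniformlyOn (fun ν => φ ∘ f ν) (φ ∘ g) atTop K := by
  rw [← tendstoLocallyUniformlyOn_iff_tendstoUniformlyOn_of_compact hK]
  intro u hu x hx
  obtain ⟨w, hw, hwo, hws, hwu⟩ := comp_open_symm_mem_uniformity_sets hu
  set B := UniformSpace.ball (φ (g x)) w
  have hB : IsOpen B := UniformSpace.isOpen_ball _ hwo
  obtain ⟨N₀, hN₀, hN₀B⟩ := mem_nhdsWithin_iff_exists_mem_nhds_inter.1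
    ((hφg x hx).preimage_mem_nhdsWithin (hB.mem_nhds (UniformSpace.mem_ball_self _ hw)))
  obtain ⟨N, hN, hNc, hNN₀⟩ := exists_mem_nhds_isClosed_subset hN₀
  refine ⟨K ∩ N, inter_mem_nhdsWithin K hN, ?_⟩
  have hfB := h (K ∩ N) (Set.inter_subset_left.trans hKD) (hK.inter_right hNc) (C ∩ φ ⁻¹' B)
    (hφ.isOpen_inter_preimage hC hB)
    (Set.image_subset_iff.2 fun y hy => ⟨hgK hy.1, hN₀B ⟨hNN₀ hy.2, hy.1⟩⟩)
  filter_upwards [hfB] with ν hν y hy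
  have hgy : (φ (g x), φ (g y)) ∈ w := hN₀B ⟨hNN₀ hy.2, hy.1⟩
  exact hwu (SetRel.prodMk_mem_comp (SetRel.symm w hgy) (hν ⟨y, hy, rfl⟩).2)

end Convergence

section Curves

variable {n : ℕ} {D : Set ℂ} {f : ℕ → ℂ → Pn n} {g : ℂ → Pn n}

theorem tendstoOnCompacts_of_forall_exists_isRedRep
    (hloc : ∀ a ∈ D, ∃ U : Set ℂ, IsOpen U ∧ a ∈ U ∧ U ⊆ D ∧
      ∃ F : ℕ → ℂ → Fin (n + 1) → ℂ, (∀ ν, IsRedRep n U (f ν) (F ν)) ∧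
      ∃ G : ℂ → Fin (n + 1) → ℂ, IsRedRep n U g G ∧
        ∀ l : Fin (n + 1), ∀ K ⊆ U, IsCompact K →
          TendstoUniformlyOn (fun ν z => F ν z l) (fun z => G z l) atTop K) :
    TendstoOnCompacts D f g := by
  intro K hKD hK V hV hgK
  suffices ∀ᶠ ν in atTop, ∀ z ∈ K, f ν z ∈ V from
    this.mono fun ν hν => Set.image_subset_iff.2 hν
  refine hK.eventually_forall_mem fun a ha => ?_
  obtain ⟨U, hU, haU, -, F, hF, G, hG, hFG⟩ := hloc a (hKD ha)
  obtain ⟨B, hB, hBU, hBc⟩ := local_compact_nhds (hU.mem_nhds haU)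
  have hFa : Tendsto (fun q : ℕ × ℂ => F q.1 q.2) (atTop ×ˢ 𝓝 a) (𝓝 (G a)) :=
    tendsto_pi_nhds.2 fun l => (hFG l B hBU hBc).tendsto_prod_nhds hB
      ((hG.holo l).continuousOn.continuousAt (hU.mem_nhds haU))
  have hGa : G a ∈ {v : Fin (n + 1) → ℂ | ∃ h : v ≠ 0, Projectivization.mk ℂ v h ∈ V} :=
    ⟨hG.nonzero a haU, hG.repr a haU ▸ hgK ⟨a, ha, rfl⟩⟩
  filter_upwards [hFa.eventually ((isOpen_Pn_iff.1 hV).mem_nhds hGa),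
    tendsto_snd.eventually (hU.mem_nhds haU)] with q hq hqU
  obtain ⟨_, hq⟩ := hq
  rwa [(hF q.1).repr q.2 hqU]

theorem TendstoOnCompacts.exists_isRedRep (hf : ∀ ν, IsHolCurve n D (f ν))
    (hg : IsHolCurve n D g) (h : TendstoOnCompacts D f g) {a : ℂ} (ha : a ∈ D) :
    ∃ U : Set ℂ, IsOpen U ∧ a ∈ U ∧ U ⊆ D ∧
      ∃ F : ℕ → ℂ → Fin (n + 1) → ℂ, (∀ ν, IsRedRep n U (f ν) (F ν)) ∧
      ∃ G : ℂ → Fin (n + 1) → ℂ, IsRedRep n U g G ∧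
        ∀ l : Fin (n + 1), ∀ K ⊆ U, IsCompact K →
          TendstoUniformlyOn (fun ν z => F ν z l) (fun z => G z l) atTop K := by
  obtain ⟨i, hi⟩ : ∃ i, (g a).rep i ≠ 0 := Function.ne_iff.1 (g a).rep_nonzero
  have hC := isOpen_setOf_rep_ne_zero (n := n) i
  obtain ⟨U₀, hU₀, haU₀, hU₀D, -⟩ := hg a ha
  obtain ⟨r, hr, hrU₀⟩ := Metric.nhds_basis_closedBall.mem_iff.1
    (inter_mem (hU₀.mem_nhds haU₀) ((hg.continuousAt ha).preimage_mem_nhds (hC.mem_nhds hi)))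
  obtain ⟨N, hN⟩ := eventually_atTop.1 (h _ (fun z hz => hU₀D (hrU₀ hz).1)
    (isCompact_closedBall a r) _ hC (Set.image_subset_iff.2 fun z hz => (hrU₀ hz).2))
  -- The first `N` curves may meet `{wᵢ = 0}` near `a`, so they keep arbitrary representations.
  obtain ⟨W, hW, haW, F₀, hF₀⟩ := exists_isRedRep_of_lt hf ha N
  set U := Metric.ball a r ∩ W
  have hUr : U ⊆ Metric.closedBall a r := fun z hz => Metric.ball_subset_closedBall hz.1
  have hUD : U ⊆ D := fun z hz => hU₀D (hrU₀ (hUr hz)).1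
  set F : ℕ → ℂ → Fin (n + 1) → ℂ := fun ν =>
    if N ≤ ν then fun z => affineCoords i (f ν z) else F₀ ν
  have hF : ∀ ν, IsRedRep n U (f ν) (F ν) := by
    intro ν
    by_cases hν : N ≤ ν
    · simpa only [F, if_pos hν] using (hf ν).isRedRep_affineCoords hUD
        fun z hz => hN ν hν ⟨z, hUr hz, rfl⟩
    · simpa only [F, if_neg hν] using (hF₀ ν (not_le.1 hν)).mono Set.inter_subset_right
  have hG := hg.isRedRep_affineCoords hUD fun z hz => (hrU₀ (hUr hz)).2
  refine ⟨U, Metric.isOpen_ball.inter hW, ⟨Metric.mem_ball_self hr, haW⟩, hUD, F, hF, _, hG,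
    fun l K hKU hK => ?_⟩
  refine (h.tendstoUniformlyOn_comp (φ := fun p => affineCoords i p l) (hKU.trans hUD) hK hC
    ((continuous_apply l).comp_continuousOn (continuousOn_affineCoords i))
    (fun z hz => (hrU₀ (hUr (hKU hz))).2) ((hG.holo l).mono hKU).continuousOn).congr ?_
  filter_upwards [eventually_ge_atTop N] with ν hν z _
  simp only [F, if_pos hν, Function.comp_apply]

end Curves

theorem stmt9_general (n : ℕ)
    (D : Set ℂ)
    (f : ℕ → ℂ → Pn n) (hf : ∀ ν, IsHolCurve n D (f ν))
    (g : ℂ → Pn n) (hg : IsHolCurve n D g) :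
    TendstoOnCompacts D f g ↔
      ∀ a ∈ D, ∃ U : Set ℂ, IsOpen U ∧ a ∈ U ∧ U ⊆ D ∧
        ∃ F : ℕ → ℂ → Fin (n + 1) → ℂ, (∀ ν, IsRedRep n U (f ν) (F ν)) ∧
        ∃ G : ℂ → Fin (n + 1) → ℂ, IsRedRep n U g G ∧
          ∀ l : Fin (n + 1), ∀ K ⊆ U, IsCompact K →
            TendstoUniformlyOn (fun ν z => F ν z l) (fun z => G z l) atTop K :=
  ⟨fun h _ ha => h.exists_isRedRep hf hg ha, tendstoOnCompacts_of_forall_exists_isRedRep⟩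

/-- A sequence of holomorphic curves on a planar domain `D` into `ℙⁿ` converges
uniformly on compact subsets of `D` to a holomorphic curve `g` iff around every point
of `D` there is a fixed open neighbourhood `U` on which the curves admit reduced
representations whose components converge uniformly on compact subsets of `U` to the
components of a reduced representation of `g` on `U`. -/
theorem stmt9 (n : ℕ)
    (D : Set ℂ) (hD : IsOpen D) (hDconn : IsPreconnected D) (hDne : D.Nonempty)
    (f : ℕ → ℂ → Pn n) (hf : ∀ ν, IsHolCurve n D (f ν))
    (g : ℂ → Pn n) (hg : IsHolCurve n D g) :
    TendstoOnCompacts D f g ↔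
      ∀ a ∈ D, ∃ U : Set ℂ, IsOpen U ∧ a ∈ U ∧ U ⊆ D ∧
        ∃ F : ℕ → ℂ → Fin (n + 1) → ℂ, (∀ ν, IsRedRep n U (f ν) (F ν)) ∧
        ∃ G : ℂ → Fin (n + 1) → ℂ, IsRedRep n U g G ∧
          ∀ l : Fin (n + 1), ∀ K ⊆ U, IsCompact K →
            TendstoUniformlyOn (fun ν z => F ν z l) (fun z => G z l) atTop K :=
  stmt9_general n D f hf g hg
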